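/- arXiv:2008.12344 — 2 statements merged into one kernel-verified Lean document; each statement's English description precedes it below -/
import Mathlib

section
/- If A and B are operators (or matrices) such that [A,B] commutes with both A and B, then exp(A) exp(B) = exp((1/2)[A,B]) exp(A + B), and consequently exp(A) exp(B) = exp([A,B]) exp(B) exp(A). -/
/-
Both `s ↦ exp (s • a) * exp (s • b)` and `s ↦ exp (s • (a + b)) * exp ((s ^ 2 / 2) • [a, b])` solve
`Y' = (a + b + s • [a, b]) * Y` with `Y 0 = 1`: for the first this is the conjugation rule
`exp (s • a) * b = (b + s • [a, b]) * exp (s • a)`, itself proved by comparing two solutions of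
`Y' = a * Y`. Such solutions are unique because a left integrating factor `w` with `w' = -w M`
makes `w (u - v)` constant. At `s = 1` this is the first identity; applying it to `(b, a)`,
whose commutator is `-[a, b]`, gives the second.
-/

open Matrix

attribute [local instance] Matrix.linftyOpNormedAddCommGroup Matrix.linftyOpNormedRing
  Matrix.linftyOpNormedSpace Matrix.linftyOpNormedAlgebra

open NormedSpace

theorem eq_of_hasDerivAt_mul_of_hasDerivAt_neg_mul {𝕜 R : Type*} [RCLike 𝕜] [NormedRing R]
    [NormedAlgebra 𝕜 R] {u v w M : 𝕜 → R}
    (hu : ∀ s, HasDerivAt u (M s * u s) s) (hv : ∀ s, HasDerivAt v (M s * v s) s)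
    (hw : ∀ s, HasDerivAt w (-(w s * M s)) s) (h0 : u 0 = v 0) {t : 𝕜} (hwt : IsUnit (w t)) :
    u t = v t := by
  have hconst : ∀ s, HasDerivAt (fun s => w s * (u s - v s)) 0 s := fun s =>
    ((hw s).mul ((hu s).sub (hv s))).congr_deriv (by rw [Pi.sub_apply]; noncomm_ring)
  have h := is_const_of_deriv_eq_zero (fun s => (hconst s).differentiableAt)
    (fun s => (hconst s).deriv) t 0
  rw [h0, sub_self, mul_zero, hwt.mul_right_eq_zero] at h
  exact sub_eq_zero.1 h

section RCLike

variable {𝕂 𝔸 : Type*} [RCLike 𝕂] [NormedRing 𝔸] [NormedAlgebra 𝕂 𝔸] [CompleteSpace 𝔸]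

theorem exp_smul_mul_eq_mul_exp_smul {a b : 𝔸} (ha : Commute (a * b - b * a) a) (t : 𝕂) :
    exp (t • a) * b = (b + t • (a * b - b * a)) * exp (t • a) := by
  let +nondep : NormedAlgebra ℚ 𝔸 := .restrictScalars ℚ 𝕂 𝔸
  refine eq_of_hasDerivAt_mul_of_hasDerivAt_neg_mul (M := fun _ => a)
    (u := fun s => exp (s • a) * b) (v := fun s => (b + s • (a * b - b * a)) * exp (s • a))
    (w := fun s => exp (s • -a))
    (fun s => ((hasDerivAt_exp_smul_const' a s).mul_const b).congr_deriv (mul_assoc _ _ _))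
    (fun s => ?_) (fun s => (hasDerivAt_exp_smul_const (-a) s).congr_deriv (mul_neg _ _))
    (by simp) (NormedSpace.isUnit_exp _)
  refine ((((hasDerivAt_id s).smul_const (a * b - b * a)).const_add b).mul
    (hasDerivAt_exp_smul_const' a s)).congr_deriv ?_
  rw [← mul_assoc, ← mul_assoc, one_smul, ← add_mul]
  congr 1
  simp only [add_mul, mul_add, smul_mul_assoc, mul_smul_comm, ha.eq]
  noncomm_ring

theorem hasDerivAt_exp_smul_mul_exp_smul {a b : 𝔸} (ha : Commute (a * b - b * a) a) (s : 𝕂) :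
    HasDerivAt (fun s : 𝕂 => exp (s • a) * exp (s • b))
      ((a + b + s • (a * b - b * a)) * (exp (s • a) * exp (s • b))) s := by
  refine ((hasDerivAt_exp_smul_const' a s).mul (hasDerivAt_exp_smul_const' b s)).congr_deriv ?_
  rw [← mul_assoc (exp (s • a)), exp_smul_mul_eq_mul_exp_smul ha]
  noncomm_ring

omit [CompleteSpace 𝔸] in
theorem commute_add_smul_exp_smul_mul_exp_smul {x y : 𝔸} (h : Commute x y) (s r r' : 𝕂) :
    Commute (x + s • y) (exp (r • x) * exp (r' • y)) :=
  have hx : Commute (x + s • y) x := (Commute.refl x).add_left (h.symm.smul_left s)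
  have hy : Commute (x + s • y) y := h.add_left ((Commute.refl y).smul_left s)
  (hx.smul_right r).exp_right.mul_right (hy.smul_right r').exp_right

theorem hasDerivAt_exp_smul_mul_exp_sq_div_two_smul {x y : 𝔸} (h : Commute x y) (s : 𝕂) :
    HasDerivAt (fun s : 𝕂 => exp (s • x) * exp ((s ^ 2 / 2) • y))
      ((x + s • y) * (exp (s • x) * exp ((s ^ 2 / 2) • y))) s := by
  have hsq : HasDerivAt (fun s : 𝕂 => s ^ 2 / 2) s s := by
    simpa using (hasDerivAt_pow 2 s).div_const 2
  refine ((hasDerivAt_exp_smul_const' x s).mul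
    ((hasDerivAt_exp_smul_const' y (s ^ 2 / 2)).scomp s hsq)).congr_deriv ?_
  have hyx : exp (s • x) * y = y * exp (s • x) := ((h.symm.smul_right s).exp_right).eq.symm
  rw [Function.comp_apply, mul_smul_comm, ← mul_assoc (exp (s • x)), hyx]
  noncomm_ring

theorem exp_mul_exp_eq_exp_half_commutator_mul_exp {a b : 𝔸}
    (ha : Commute (a * b - b * a) a) (hb : Commute (a * b - b * a) b) :
    exp a * exp b = exp ((1 / 2 : 𝕂) • (a * b - b * a)) * exp (a + b) := by
  let +nondep : NormedAlgebra ℚ 𝔸 := .restrictScalars ℚ 𝕂 𝔸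
  have hc : Commute (a + b) (a * b - b * a) := (ha.add_right hb).symm
  have hc' : Commute (-(a + b)) (-(a * b - b * a)) := hc.neg_left.neg_right
  have key := eq_of_hasDerivAt_mul_of_hasDerivAt_neg_mul (t := (1 : 𝕂))
    (w := fun s => exp (s • -(a + b)) * exp ((s ^ 2 / 2) • -(a * b - b * a)))
    (hasDerivAt_exp_smul_mul_exp_smul ha) (hasDerivAt_exp_smul_mul_exp_sq_div_two_smul hc)
    (fun s => (hasDerivAt_exp_smul_mul_exp_sq_div_two_smul hc' s).congr_deriv (by
      rw [(commute_add_smul_exp_smul_mul_exp_smul hc' s s (s ^ 2 / 2)).eq]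
      simp only [smul_neg, ← neg_add, mul_neg]))
    (by simp) ((NormedSpace.isUnit_exp _).mul (NormedSpace.isUnit_exp _))
  simp only [one_smul, one_pow] at key
  rw [key, ← ((hc.smul_right _).exp).eq, one_div]

end RCLike

theorem exp_mul_exp_eq_exp_commutator_mul_exp_mul_exp {𝔸 : Type*} [NormedRing 𝔸]
    [NormedAlgebra ℝ 𝔸] [CompleteSpace 𝔸] {a b : 𝔸}
    (ha : Commute (a * b - b * a) a) (hb : Commute (a * b - b * a) b) :
    exp a * exp b = exp (a * b - b * a) * (exp b * exp a) := by
  let +nondep : NormedAlgebra ℚ 𝔸 := .restrictScalars ℚ ℝ 𝔸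
  have hba : -(a * b - b * a) = b * a - a * b := neg_sub _ _
  have hb' : Commute (b * a - a * b) b := hba ▸ hb.neg_left
  have ha' : Commute (b * a - a * b) a := hba ▸ ha.neg_left
  rw [exp_mul_exp_eq_exp_half_commutator_mul_exp (𝕂 := ℝ) ha hb,
    exp_mul_exp_eq_exp_half_commutator_mul_exp (𝕂 := ℝ) hb' ha', ← hba, ← mul_assoc,
    ← NormedSpace.exp_add_of_commute ((Commute.refl _).neg_right.smul_right _), add_comm b a]
  congr 2
  module

/-- If `[A,B]` commutes with both `A` and `B`, then
`exp(A) exp(B) = exp((1/2)[A,B]) exp(A + B)`, and consequently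
`exp(A) exp(B) = exp([A,B]) exp(B) exp(A)`. -/
theorem exp_mul_exp_of_commutator_central
    (n : ℕ) (A B : Matrix (Fin n) (Fin n) ℂ)
    (hA : Commute (A * B - B * A) A) (hB : Commute (A * B - B * A) B) :
    NormedSpace.exp A * NormedSpace.exp B
        = NormedSpace.exp ((1 / 2 : ℂ) • (A * B - B * A))
          * NormedSpace.exp (A + B)
    ∧ NormedSpace.exp A * NormedSpace.exp B
        = NormedSpace.exp (A * B - B * A)
          * (NormedSpace.exp B * NormedSpace.exp A) :=
  ⟨exp_mul_exp_eq_exp_half_commutator_mul_exp hA hB,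
    exp_mul_exp_eq_exp_commutator_mul_exp_mul_exp hA hB⟩
end

section
/- Let R be a real antisymmetric n×n matrix, ∇_k = ∂_k − (1/2)iR_{kj}x^j, and for a real symmetric positive definite matrix g define the Laplacian Δ_g = g^{jk} ∇_j ∇_k. For two positive symmetric matrices g_+ and g_−, the commutator [Δ_{g_+}, Δ_{g_−}] = 2i Δ_G, where G⁻¹ = g_+⁻¹ R g_−⁻¹ − g_−⁻¹ R g_+⁻¹, i.e. [Δ_{g_+}, Δ_{g_−}] = 2i (g_+⁻¹ R g_−⁻¹ − g_−⁻¹ R g_+⁻¹)^{jk} ∇_j ∇_k. -/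
open Matrix

/-- The operator `∇_k = ∂_k − (1/2) i R_{kj} x^j` acting on complex-valued functions
on `ℝⁿ`. -/
noncomputable def nabla (n : ℕ) (R : Matrix (Fin n) (Fin n) ℝ) (k : Fin n)
    (f : (Fin n → ℝ) → ℂ) : (Fin n → ℝ) → ℂ :=
  fun x => fderiv ℝ f x (Pi.single k 1)
    - (1 / 2 : ℂ) * Complex.I * (∑ j, (R k j : ℂ) * (x j : ℂ)) * f x

/-- The Laplacian `Δ = h^{jk} ∇_j ∇_k` determined by a matrix of coefficients
`h = (h^{jk})` (here `h` denotes the matrix of upper-index coefficients, e.g. `g⁻¹`). -/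
noncomputable def lap (n : ℕ) (R : Matrix (Fin n) (Fin n) ℝ)
    (h : Matrix (Fin n) (Fin n) ℝ) (f : (Fin n → ℝ) → ℂ) : (Fin n → ℝ) → ℂ :=
  fun x => ∑ j, ∑ k, (h j k : ℂ) * nabla n R j (nabla n R k f) x

section Aux
variable {n : ℕ}

noncomputable def Lclm (n : ℕ) (R : Matrix (Fin n) (Fin n) ℝ) (k : Fin n) :
    (Fin n → ℝ) →L[ℝ] ℂ :=
  ∑ j, (R k j : ℂ) • (Complex.ofRealCLM.comp (ContinuousLinearMap.proj j))

lemma Lclm_apply (R : Matrix (Fin n) (Fin n) ℝ) (k : Fin n) (x : Fin n → ℝ) :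
    Lclm n R k x = ∑ j, (R k j : ℂ) * (x j : ℂ) := by
  simp [Lclm, ContinuousLinearMap.sum_apply]

lemma Lclm_single (R : Matrix (Fin n) (Fin n) ℝ) (k j : Fin n) :
    Lclm n R k (Pi.single j 1) = (R k j : ℂ) := by
  rw [Lclm_apply, Finset.sum_eq_single j]
  · simp
  · intro b _ hb; simp [Pi.single_apply, hb]
  · simp


lemma contDiff_fderiv_apply {f : (Fin n → ℝ) → ℂ} (hf : ContDiff ℝ (⊤ : ℕ∞) f) (v : Fin n → ℝ) :
    ContDiff ℝ (⊤ : ℕ∞) (fun x => fderiv ℝ f x v) :=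
  (hf.fderiv_right (by simp)).clm_apply contDiff_const

lemma nabla_fun_eq (R : Matrix (Fin n) (Fin n) ℝ) (k : Fin n) (f : (Fin n → ℝ) → ℂ) :
    nabla n R k f = fun x => fderiv ℝ f x (Pi.single k 1)
      - (1 / 2 : ℂ) * Complex.I * (Lclm n R k x * f x) := by
  funext x; rw [nabla, Lclm_apply]; ring

lemma nabla_contDiff {f : (Fin n → ℝ) → ℂ} (R : Matrix (Fin n) (Fin n) ℝ) (k : Fin n)
    (hf : ContDiff ℝ (⊤ : ℕ∞) f) : ContDiff ℝ (⊤ : ℕ∞) (nabla n R k f) := by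
  rw [nabla_fun_eq]
  exact (contDiff_fderiv_apply hf _).sub
    (contDiff_const.mul (((Lclm n R k).contDiff).mul hf))

lemma fderiv_fderiv_symm {f : (Fin n → ℝ) → ℂ} (hf : ContDiff ℝ (⊤ : ℕ∞) f)
    (x v w : Fin n → ℝ) :
    fderiv ℝ (fun y => fderiv ℝ f y v) x w = fderiv ℝ (fun y => fderiv ℝ f y w) x v := by
  have hd : DifferentiableAt ℝ (fderiv ℝ f) x :=
    ((hf.fderiv_right (m := 1) (WithTop.coe_le_coe.mpr le_top)).differentiable one_ne_zero).differentiableAt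
  have h1 : ∀ u z : Fin n → ℝ, fderiv ℝ (fun y => fderiv ℝ f y u) x z
      = fderiv ℝ (fderiv ℝ f) x z u := by
    intro u z
    rw [fderiv_clm_apply hd (differentiableAt_const u)]
    simp
  rw [h1, h1]
  exact (hf.contDiffAt.isSymmSndFDerivAt (by rw [minSmoothness_of_isRCLikeNormedField]; exact WithTop.coe_le_coe.mpr (le_top : (2 : ℕ∞) ≤ ⊤))) w v

lemma fderiv_nabla {f : (Fin n → ℝ) → ℂ} (R : Matrix (Fin n) (Fin n) ℝ) (k : Fin n)
    (hf : ContDiff ℝ (⊤ : ℕ∞) f) (x v : Fin n → ℝ) :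
    fderiv ℝ (nabla n R k f) x v
      = fderiv ℝ (fun y => fderiv ℝ f y (Pi.single k 1)) x v
        - (1 / 2 : ℂ) * Complex.I *
          (Lclm n R k x * fderiv ℝ f x v + f x * Lclm n R k v) := by
  have hdf : Differentiable ℝ f := hf.differentiable (by simp)
  have h1 : DifferentiableAt ℝ (fun y => fderiv ℝ f y (Pi.single k 1)) x :=
    ((contDiff_fderiv_apply hf _).differentiable (by simp)).differentiableAt
  have hL : Differentiable ℝ (fun y => Lclm n R k y * f y) :=
    ((Lclm n R k).differentiable).mul hdf
  rw [nabla_fun_eq, fderiv_fun_sub h1 ((hL x).const_mul _)]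
  rw [fderiv_const_mul (hL x), fderiv_fun_mul ((Lclm n R k).differentiableAt) (hdf x)]
  simp only [ContinuousLinearMap.sub_apply, ContinuousLinearMap.smul_apply,
    ContinuousLinearMap.add_apply, (Lclm n R k).fderiv, smul_eq_mul]
  try ring

lemma nabla_nabla_apply {f : (Fin n → ℝ) → ℂ} (R : Matrix (Fin n) (Fin n) ℝ)
    (j k : Fin n) (hf : ContDiff ℝ (⊤ : ℕ∞) f) (x : Fin n → ℝ) :
    nabla n R j (nabla n R k f) x
      = fderiv ℝ (fun y => fderiv ℝ f y (Pi.single k 1)) x (Pi.single j 1)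
        - (1 / 2 : ℂ) * Complex.I * (R k j : ℂ) * f x
        - (1 / 2 : ℂ) * Complex.I * Lclm n R k x * fderiv ℝ f x (Pi.single j 1)
        - (1 / 2 : ℂ) * Complex.I * Lclm n R j x * fderiv ℝ f x (Pi.single k 1)
        + ((1 / 2 : ℂ) * Complex.I) * ((1 / 2 : ℂ) * Complex.I)
            * Lclm n R j x * Lclm n R k x * f x := by
  have h0 : nabla n R j (nabla n R k f) x
      = fderiv ℝ (nabla n R k f) x (Pi.single j 1)
        - (1 / 2 : ℂ) * Complex.I * (Lclm n R j x * nabla n R k f x) :=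
    congrFun (nabla_fun_eq R j (nabla n R k f)) x
  rw [h0, fderiv_nabla R k hf, congrFun (nabla_fun_eq R k f) x, Lclm_single]
  ring

lemma nabla_comm {f : (Fin n → ℝ) → ℂ} {R : Matrix (Fin n) (Fin n) ℝ} (hR : Rᵀ = -R)
    (j k : Fin n) (hf : ContDiff ℝ (⊤ : ℕ∞) f) (x : Fin n → ℝ) :
    nabla n R j (nabla n R k f) x - nabla n R k (nabla n R j f) x
      = Complex.I * (R j k : ℂ) * f x := by
  have hRkj : (R k j : ℝ) = - R j k := by
    have h := congrFun (congrFun hR j) k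
    simpa [Matrix.transpose_apply, Matrix.neg_apply] using h
  rw [nabla_nabla_apply R j k hf, nabla_nabla_apply R k j hf,
    fderiv_fderiv_symm hf, hRkj]
  push_cast
  ring

lemma nabla_add {f g : (Fin n → ℝ) → ℂ} (R : Matrix (Fin n) (Fin n) ℝ) (k : Fin n)
    (hf : Differentiable ℝ f) (hg : Differentiable ℝ g) (x : Fin n → ℝ) :
    nabla n R k (fun y => f y + g y) x = nabla n R k f x + nabla n R k g x := by
  simp only [nabla]
  rw [fderiv_fun_add (hf x) (hg x)]
  simp only [ContinuousLinearMap.add_apply]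
  ring

lemma nabla_const_mul {f : (Fin n → ℝ) → ℂ} (R : Matrix (Fin n) (Fin n) ℝ) (k : Fin n)
    (c : ℂ) (hf : Differentiable ℝ f) (x : Fin n → ℝ) :
    nabla n R k (fun y => c * f y) x = c * nabla n R k f x := by
  simp only [nabla]
  rw [fderiv_const_mul (hf x)]
  simp only [ContinuousLinearMap.smul_apply, smul_eq_mul]
  ring

lemma nabla_sum {ι : Type*} (s : Finset ι) (F : ι → (Fin n → ℝ) → ℂ)
    (R : Matrix (Fin n) (Fin n) ℝ) (k : Fin n)
    (hF : ∀ i ∈ s, Differentiable ℝ (F i)) (x : Fin n → ℝ) :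
    nabla n R k (fun y => ∑ i ∈ s, F i y) x = ∑ i ∈ s, nabla n R k (F i) x := by
  simp only [nabla]
  rw [fderiv_fun_sum (fun i hi => ((hF i hi) x))]
  simp only [ContinuousLinearMap.coe_sum', Finset.sum_apply, Finset.mul_sum,
    Finset.sum_sub_distrib]

lemma nabla_add_mul {G H : (Fin n → ℝ) → ℂ} (R : Matrix (Fin n) (Fin n) ℝ) (k : Fin n)
    (c : ℂ) (hG : Differentiable ℝ G) (hH : Differentiable ℝ H) (x : Fin n → ℝ) :
    nabla n R k (fun y => G y + c * H y) x = nabla n R k G x + c * nabla n R k H x := by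
  have h1 := nabla_add (f := G) (g := fun y => c * H y) R k hG (hH.const_mul c) x
  rw [h1, nabla_const_mul R k c hH x]

lemma comm_fun {f : (Fin n → ℝ) → ℂ} {R : Matrix (Fin n) (Fin n) ℝ} (hR : Rᵀ = -R)
    (a b : Fin n) (hf : ContDiff ℝ (⊤ : ℕ∞) f) :
    nabla n R a (nabla n R b f)
      = fun y => nabla n R b (nabla n R a f) y + Complex.I * (R a b : ℂ) * f y := by
  funext y
  have h := nabla_comm hR a b hf y
  linear_combination h

lemma quad {f : (Fin n → ℝ) → ℂ} {R : Matrix (Fin n) (Fin n) ℝ} (hR : Rᵀ = -R)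
    (hf : ContDiff ℝ (⊤ : ℕ∞) f) (j k l m : Fin n) (x : Fin n → ℝ) :
    nabla n R j (nabla n R k (nabla n R l (nabla n R m f))) x
      - nabla n R l (nabla n R m (nabla n R j (nabla n R k f))) x
    = Complex.I * (R k l : ℂ) * nabla n R j (nabla n R m f) x
      + Complex.I * (R k m : ℂ) * nabla n R j (nabla n R l f) x
      + Complex.I * (R j l : ℂ) * nabla n R m (nabla n R k f) x
      + Complex.I * (R j m : ℂ) * nabla n R l (nabla n R k f) x := by
  have sm : ∀ (a : Fin n) (g : (Fin n → ℝ) → ℂ), ContDiff ℝ (⊤ : ℕ∞) g →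
      ContDiff ℝ (⊤ : ℕ∞) (nabla n R a g) := fun a g hg => nabla_contDiff R a hg
  have sk := sm k f hf
  have sl := sm l f hf
  have smf := sm m f hf
  have smk := sm m _ sk
  have slk := sm l _ sk
  have sklm := sm k _ (sm l _ smf)
  have E1 : nabla n R j (nabla n R k (nabla n R l (nabla n R m f))) x
      = nabla n R j (nabla n R l (nabla n R k (nabla n R m f))) x
        + Complex.I * (R k l : ℂ) * nabla n R j (nabla n R m f) x := by
    rw [comm_fun hR k l smf]
    exact nabla_add_mul R j _ ((sm l _ (sm k _ smf)).differentiable (by simp))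
      (smf.differentiable (by simp)) x
  have E2 : nabla n R j (nabla n R l (nabla n R k (nabla n R m f))) x
      = nabla n R j (nabla n R l (nabla n R m (nabla n R k f))) x
        + Complex.I * (R k m : ℂ) * nabla n R j (nabla n R l f) x := by
    rw [comm_fun hR k m hf]
    have hfn : nabla n R l (fun y => nabla n R m (nabla n R k f) y
          + Complex.I * (R k m : ℂ) * f y)
        = fun y => nabla n R l (nabla n R m (nabla n R k f)) y
          + Complex.I * (R k m : ℂ) * nabla n R l f y :=
      funext fun y => nabla_add_mul R l _ (smk.differentiable (by simp))
        (hf.differentiable (by simp)) y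
    rw [hfn]
    exact nabla_add_mul R j _ ((sm l _ smk).differentiable (by simp))
      (sl.differentiable (by simp)) x
  have E3 : nabla n R j (nabla n R l (nabla n R m (nabla n R k f))) x
      = nabla n R l (nabla n R j (nabla n R m (nabla n R k f))) x
        + Complex.I * (R j l : ℂ) * nabla n R m (nabla n R k f) x := by
    have h := nabla_comm hR j l smk x
    linear_combination h
  have E4 : nabla n R l (nabla n R j (nabla n R m (nabla n R k f))) x
      = nabla n R l (nabla n R m (nabla n R j (nabla n R k f))) x
        + Complex.I * (R j m : ℂ) * nabla n R l (nabla n R k f) x := by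
    rw [comm_fun hR j m sk]
    exact nabla_add_mul R l _ ((sm m _ (sm j _ sk)).differentiable (by simp))
      (sk.differentiable (by simp)) x
  linear_combination E1 + E2 + E3 + E4

section Sums
variable {ι : Type*} [Fintype ι] {M : Type*} [AddCommMonoid M]

lemma sum3_rot (F : ι → ι → ι → M) :
    ∑ a, ∑ b, ∑ c, F a b c = ∑ c, ∑ a, ∑ b, F a b c :=
  (Finset.sum_congr rfl fun _ _ => Finset.sum_comm).trans Finset.sum_comm

lemma sum3_rot2 (F : ι → ι → ι → M) :
    ∑ a, ∑ b, ∑ c, F a b c = ∑ b, ∑ c, ∑ a, F a b c :=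
  (sum3_rot F).trans (sum3_rot fun c a b => F a b c)

lemma permA (F : ι → ι → ι → ι → M) :
    ∑ a, ∑ b, ∑ c, ∑ d, F a b c d = ∑ a, ∑ d, ∑ b, ∑ c, F a b c d :=
  Finset.sum_congr rfl fun _ _ => sum3_rot _

lemma permB (F : ι → ι → ι → ι → M) :
    ∑ a, ∑ b, ∑ c, ∑ d, F a b c d = ∑ a, ∑ c, ∑ b, ∑ d, F a b c d :=
  Finset.sum_congr rfl fun _ _ => Finset.sum_comm

lemma permC (F : ι → ι → ι → ι → M) :
    ∑ a, ∑ b, ∑ c, ∑ d, F a b c d = ∑ d, ∑ b, ∑ a, ∑ c, F a b c d :=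
  (permA F).trans (Finset.sum_comm.trans
    (Finset.sum_congr rfl fun _ _ => Finset.sum_comm))

lemma permD (F : ι → ι → ι → ι → M) :
    ∑ a, ∑ b, ∑ c, ∑ d, F a b c d = ∑ c, ∑ b, ∑ a, ∑ d, F a b c d :=
  (permB F).trans (Finset.sum_comm.trans
    (Finset.sum_congr rfl fun _ _ => Finset.sum_comm))

lemma permRot (F : ι → ι → ι → ι → M) :
    ∑ a, ∑ b, ∑ c, ∑ d, F a b c d = ∑ c, ∑ d, ∑ a, ∑ b, F a b c d :=
  (Finset.sum_congr rfl fun _ _ => sum3_rot2 _).trans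
    (Finset.sum_comm.trans (Finset.sum_congr rfl fun _ _ => Finset.sum_comm))

end Sums


lemma nabla_double_sum (R : Matrix (Fin n) (Fin n) ℝ) (k : Fin n)
    (b : Matrix (Fin n) (Fin n) ℝ) (F : Fin n → Fin n → (Fin n → ℝ) → ℂ)
    (hF : ∀ l m, Differentiable ℝ (F l m)) (x : Fin n → ℝ) :
    nabla n R k (fun y => ∑ l, ∑ m, (b l m : ℂ) * F l m y) x
      = ∑ l, ∑ m, (b l m : ℂ) * nabla n R k (F l m) x := by
  have h1 : ∀ l ∈ Finset.univ (α := Fin n),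
      Differentiable ℝ (fun y => ∑ m, (b l m : ℂ) * F l m y) :=
    fun l _ => Differentiable.fun_sum fun m _ => (hF l m).const_mul _
  rw [nabla_sum Finset.univ (fun l y => ∑ m, (b l m : ℂ) * F l m y) R k h1 x]
  refine Finset.sum_congr rfl fun l _ => ?_
  rw [nabla_sum Finset.univ (fun m y => (b l m : ℂ) * F l m y) R k
    (fun m _ => (hF l m).const_mul _) x]
  exact Finset.sum_congr rfl fun m _ => nabla_const_mul R k _ (hF l m) x

lemma lap_lap (R : Matrix (Fin n) (Fin n) ℝ) (a b : Matrix (Fin n) (Fin n) ℝ)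
    (f : (Fin n → ℝ) → ℂ) (hf : ContDiff ℝ (⊤ : ℕ∞) f) (x : Fin n → ℝ) :
    lap n R a (lap n R b f) x
      = ∑ j, ∑ k, ∑ l, ∑ m, (a j k : ℂ) * ((b l m : ℂ)
          * nabla n R j (nabla n R k (nabla n R l (nabla n R m f))) x) := by
  have hQ : ∀ l m : Fin n, ContDiff ℝ (⊤ : ℕ∞) (nabla n R l (nabla n R m f)) :=
    fun l m => nabla_contDiff R l (nabla_contDiff R m hf)
  have hstep : ∀ k : Fin n, nabla n R k (lap n R b f)
      = fun y => ∑ l, ∑ m, (b l m : ℂ)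
          * nabla n R k (nabla n R l (nabla n R m f)) y := by
    intro k
    funext y
    exact nabla_double_sum R k b _ (fun l m => (hQ l m).differentiable (by simp)) y
  show ∑ j, ∑ k, (a j k : ℂ) * nabla n R j (nabla n R k (lap n R b f)) x = _
  refine Finset.sum_congr rfl fun j _ => Finset.sum_congr rfl fun k _ => ?_
  rw [hstep k, nabla_double_sum R j b _
    (fun l m => (nabla_contDiff R k (hQ l m)).differentiable (by simp)) x,
    Finset.mul_sum]
  exact Finset.sum_congr rfl fun l _ => by rw [Finset.mul_sum]

lemma entry_mul (a R b : Matrix (Fin n) (Fin n) ℝ) (u v : Fin n) :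
    ((a * R * b) u v : ℂ) = ∑ p, ∑ q, (a u p : ℂ) * (R p q : ℂ) * (b q v : ℂ) := by
  have h : (a * R * b) u v = ∑ p, ∑ q, a u p * R p q * b q v := by
    rw [Matrix.mul_apply]
    simp_rw [Matrix.mul_apply, Finset.sum_mul]
    exact Finset.sum_comm
  rw [h]
  push_cast
  rfl

lemma lap_mulmat (R a b : Matrix (Fin n) (Fin n) ℝ) (f : (Fin n → ℝ) → ℂ)
    (x : Fin n → ℝ) :
    lap n R (a * R * b) f x = ∑ u, ∑ v, ∑ p, ∑ q,
      (a u p : ℂ) * (R p q : ℂ) * (b q v : ℂ) * nabla n R u (nabla n R v f) x := by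
  show ∑ u, ∑ v, ((a * R * b) u v : ℂ) * nabla n R u (nabla n R v f) x = _
  refine Finset.sum_congr rfl fun u _ => Finset.sum_congr rfl fun v _ => ?_
  rw [entry_mul, Finset.sum_mul]
  exact Finset.sum_congr rfl fun p _ => by rw [Finset.sum_mul]

lemma lap_submat (R c d : Matrix (Fin n) (Fin n) ℝ) (f : (Fin n → ℝ) → ℂ)
    (x : Fin n → ℝ) :
    lap n R (c - d) f x = lap n R c f x - lap n R d f x := by
  simp only [lap, Matrix.sub_apply]
  push_cast
  simp only [sub_mul, Finset.sum_sub_distrib]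

lemma key {R a b : Matrix (Fin n) (Fin n) ℝ} (hR : Rᵀ = -R) (ha : aᵀ = a)
    (hb : bᵀ = b) (f : (Fin n → ℝ) → ℂ) (hf : ContDiff ℝ (⊤ : ℕ∞) f) (x : Fin n → ℝ) :
    lap n R a (lap n R b f) x - lap n R b (lap n R a f) x
      = 2 * Complex.I * lap n R (a * R * b - b * R * a) f x := by
  have hAc : ∀ i j : Fin n, ((a i j : ℝ) : ℂ) = ((a j i : ℝ) : ℂ) := by
    intro i j
    have h := congrFun (congrFun ha j) i
    simp only [Matrix.transpose_apply] at h
    exact_mod_cast congrArg Complex.ofReal h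
  have hBc : ∀ i j : Fin n, ((b i j : ℝ) : ℂ) = ((b j i : ℝ) : ℂ) := by
    intro i j
    have h := congrFun (congrFun hb j) i
    simp only [Matrix.transpose_apply] at h
    exact_mod_cast congrArg Complex.ofReal h
  have hRcc : ∀ i j : Fin n, ((R i j : ℝ) : ℂ) = -((R j i : ℝ) : ℂ) := by
    intro i j
    have h := congrFun (congrFun hR j) i
    simp only [Matrix.transpose_apply, Matrix.neg_apply] at h
    rw [h]
    push_cast
    ring
  rw [lap_lap R a b f hf x, lap_lap R b a f hf x,
    permRot (fun j k l m => (b j k : ℂ) * ((a l m : ℂ)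
      * nabla n R j (nabla n R k (nabla n R l (nabla n R m f))) x))]
  simp only [← Finset.sum_sub_distrib]
  have hquad : ∀ j k l m : Fin n,
      (a j k : ℂ) * ((b l m : ℂ)
          * nabla n R j (nabla n R k (nabla n R l (nabla n R m f))) x)
        - (b l m : ℂ) * ((a j k : ℂ)
          * nabla n R l (nabla n R m (nabla n R j (nabla n R k f))) x)
      = Complex.I * (R k l : ℂ)
            * ((a j k : ℂ) * (b l m : ℂ) * nabla n R j (nabla n R m f) x)
        + Complex.I * (R k m : ℂ)
            * ((a j k : ℂ) * (b l m : ℂ) * nabla n R j (nabla n R l f) x)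
        + Complex.I * (R j l : ℂ)
            * ((a j k : ℂ) * (b l m : ℂ) * nabla n R m (nabla n R k f) x)
        + Complex.I * (R j m : ℂ)
            * ((a j k : ℂ) * (b l m : ℂ) * nabla n R l (nabla n R k f) x) := by
    intro j k l m
    linear_combination ((a j k : ℂ) * (b l m : ℂ)) * quad hR hf j k l m x
  simp only [hquad, Finset.sum_add_distrib]
  have hT1 : ∑ j, ∑ k, ∑ l, ∑ m : Fin n, Complex.I * (R k l : ℂ)
        * ((a j k : ℂ) * (b l m : ℂ) * nabla n R j (nabla n R m f) x)
      = Complex.I * lap n R (a * R * b) f x := by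
    rw [permA (fun j k l m => Complex.I * (R k l : ℂ)
      * ((a j k : ℂ) * (b l m : ℂ) * nabla n R j (nabla n R m f) x)),
      lap_mulmat R a b f x]
    simp only [Finset.mul_sum]
    refine Finset.sum_congr rfl fun u _ => Finset.sum_congr rfl fun v _ =>
      Finset.sum_congr rfl fun p _ => Finset.sum_congr rfl fun q _ => ?_
    ring
  have hT2 : ∑ j, ∑ k, ∑ l, ∑ m : Fin n, Complex.I * (R k m : ℂ)
        * ((a j k : ℂ) * (b l m : ℂ) * nabla n R j (nabla n R l f) x)
      = Complex.I * lap n R (a * R * b) f x := by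
    rw [permB (fun j k l m => Complex.I * (R k m : ℂ)
      * ((a j k : ℂ) * (b l m : ℂ) * nabla n R j (nabla n R l f) x)),
      lap_mulmat R a b f x]
    simp only [Finset.mul_sum]
    refine Finset.sum_congr rfl fun u _ => Finset.sum_congr rfl fun v _ =>
      Finset.sum_congr rfl fun p _ => Finset.sum_congr rfl fun q _ => ?_
    rw [hBc v q]
    ring
  have hT3 : ∑ j, ∑ k, ∑ l, ∑ m : Fin n, Complex.I * (R j l : ℂ)
        * ((a j k : ℂ) * (b l m : ℂ) * nabla n R m (nabla n R k f) x)
      = (-Complex.I) * lap n R (b * R * a) f x := by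
    rw [permC (fun j k l m => Complex.I * (R j l : ℂ)
      * ((a j k : ℂ) * (b l m : ℂ) * nabla n R m (nabla n R k f) x)),
      lap_mulmat R b a f x]
    simp only [Finset.mul_sum]
    refine Finset.sum_congr rfl fun u _ => Finset.sum_congr rfl fun v _ => ?_
    rw [Finset.sum_comm]
    refine Finset.sum_congr rfl fun p _ => Finset.sum_congr rfl fun q _ => ?_
    rw [hRcc q p, hBc p u]
    ring
  have hT4 : ∑ j, ∑ k, ∑ l, ∑ m : Fin n, Complex.I * (R j m : ℂ)
        * ((a j k : ℂ) * (b l m : ℂ) * nabla n R l (nabla n R k f) x)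
      = (-Complex.I) * lap n R (b * R * a) f x := by
    rw [permD (fun j k l m => Complex.I * (R j m : ℂ)
      * ((a j k : ℂ) * (b l m : ℂ) * nabla n R l (nabla n R k f) x)),
      lap_mulmat R b a f x]
    simp only [Finset.mul_sum]
    refine Finset.sum_congr rfl fun u _ => Finset.sum_congr rfl fun v _ => ?_
    rw [Finset.sum_comm]
    refine Finset.sum_congr rfl fun p _ => Finset.sum_congr rfl fun q _ => ?_
    rw [hRcc q p, hAc q v]
    ring
  rw [hT1, hT2, hT3, hT4, lap_submat]
  ring


end Aux

/-- `[Δ_{g₊}, Δ_{g₋}] = 2i Δ_G` with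
`G⁻¹ = g₊⁻¹ R g₋⁻¹ − g₋⁻¹ R g₊⁻¹`. -/
theorem laplacian_commutator
    (n : ℕ) (R : Matrix (Fin n) (Fin n) ℝ) (hR : Rᵀ = -R)
    (gp gm : Matrix (Fin n) (Fin n) ℝ)
    (hgp : gp.PosDef) (hgm : gm.PosDef)
    (f : (Fin n → ℝ) → ℂ) (hf : ContDiff ℝ (⊤ : ℕ∞) f) :
    ∀ x, lap n R gp⁻¹ (lap n R gm⁻¹ f) x - lap n R gm⁻¹ (lap n R gp⁻¹ f) x
      = 2 * Complex.I * lap n R (gp⁻¹ * R * gm⁻¹ - gm⁻¹ * R * gp⁻¹) f x := by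
  intro x
  have hp : gpᵀ = gp := by
    have h := hgp.isHermitian
    simpa [Matrix.IsHermitian, Matrix.conjTranspose_eq_transpose_of_trivial] using h
  have hm : gmᵀ = gm := by
    have h := hgm.isHermitian
    simpa [Matrix.IsHermitian, Matrix.conjTranspose_eq_transpose_of_trivial] using h
  have ha : (gp⁻¹)ᵀ = gp⁻¹ := by rw [Matrix.transpose_nonsing_inv, hp]
  have hb : (gm⁻¹)ᵀ = gm⁻¹ := by rw [Matrix.transpose_nonsing_inv, hm]
  exact key hR ha hb f hf x
end
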